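/- For a layered plan with M logical operators, each having N physical implementations, the Pareto frontier of the set of all N^M physical plans (under quality = product, cost = sum) equals the set of plans obtainable by dynamic programming that maintains, at each prefix length m, only the Pareto frontier of prefix subplans: every Pareto-optimal full plan has all its prefixes in the maintained frontiers. -/

import Mathlib

/-!
Replacing a prefix of a plan by a plan that dominates it yields a plan that dominates the
whole: costs add, and qualities multiply by the quality of the common suffix, which is
positive. Hence every prefix of a Pareto-optimal plan is Pareto-optimal among the prefix
subplans of its length. Since the dynamic program only ever retains subplans, a
Pareto-optimal prefix survives each pruning step as soon as its own prefix did.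
-/

def planQuality (P : List (ℝ × ℝ)) : ℝ := (P.map Prod.fst).prod
def planCost (P : List (ℝ × ℝ)) : ℝ := (P.map Prod.snd).sum

/-- `Q` strictly Pareto-dominates `P` (quality = product, cost = sum). -/
def Dominates (Q P : List (ℝ × ℝ)) : Prop :=
  planQuality P ≤ planQuality Q ∧ planCost Q ≤ planCost P ∧
    (planQuality P < planQuality Q ∨ planCost Q < planCost P)

/-- Pareto frontier of a set of plans. -/
def paretoFrontier (S : Set (List (ℝ × ℝ))) : Set (List (ℝ × ℝ)) :=
  {P ∈ S | ¬ ∃ Q ∈ S, Dominates Q P}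

/-- All prefix subplans of length `m`: one physical operator chosen from `impls i`
for each logical operator `i < m`. -/
def allPlans (impls : ℕ → Finset (ℝ × ℝ)) : ℕ → Set (List (ℝ × ℝ))
  | 0 => {[]}
  | m + 1 => {P | ∃ S ∈ allPlans impls m, ∃ p ∈ impls m, P = S ++ [p]}

/-- The frontiers maintained by the dynamic program: at step `m+1`, extend each frontier
subplan of length `m` by each physical operator for position `m+1` and retain the Pareto
frontier of the results. -/
def dpFrontier (impls : ℕ → Finset (ℝ × ℝ)) : ℕ → Set (List (ℝ × ℝ))
  | 0 => {[]}
  | m + 1 => paretoFrontier {P | ∃ S ∈ dpFrontier impls m, ∃ p ∈ impls m, P = S ++ [p]}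

lemma planQuality_append (A B : List (ℝ × ℝ)) :
    planQuality (A ++ B) = planQuality A * planQuality B := by
  simp [planQuality]

lemma planCost_append (A B : List (ℝ × ℝ)) :
    planCost (A ++ B) = planCost A + planCost B := by
  simp [planCost]

lemma planQuality_pos {P : List (ℝ × ℝ)} (h : ∀ x ∈ P, 0 < x.1) : 0 < planQuality P :=
  List.prod_pos fun _ ha => by
    obtain ⟨x, hx, rfl⟩ := List.mem_map.mp ha
    exact h x hx

lemma Dominates.append_right {Q S R : List (ℝ × ℝ)} (h : Dominates Q S)
    (hR : 0 < planQuality R) : Dominates (Q ++ R) (S ++ R) := by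
  obtain ⟨hq, hc, hq_lt | hc_lt⟩ := h <;>
    simp only [Dominates, planQuality_append, planCost_append]
  · exact ⟨by gcongr, by linarith, .inl (by gcongr)⟩
  · exact ⟨by gcongr, by linarith, .inr (by linarith)⟩

lemma mem_paretoFrontier_of_subset {S T : Set (List (ℝ × ℝ))} {P : List (ℝ × ℝ)}
    (hP : P ∈ paretoFrontier S) (hPT : P ∈ T) (hTS : T ⊆ S) : P ∈ paretoFrontier T :=
  ⟨hPT, fun ⟨Q, hQ, hdom⟩ => hP.2 ⟨Q, hTS hQ, hdom⟩⟩

section allPlans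

variable {impls : ℕ → Finset (ℝ × ℝ)}

lemma length_of_mem_allPlans {M : ℕ} {P : List (ℝ × ℝ)} (hP : P ∈ allPlans impls M) :
    P.length = M := by
  induction M generalizing P with
  | zero => simp_all [allPlans]
  | succ M ih =>
    obtain ⟨S, hS, p, -, rfl⟩ := hP
    simp [ih hS]

lemma forall_mem_of_mem_allPlans {r : ℝ × ℝ → Prop} {M : ℕ}
    (h : ∀ i < M, ∀ p ∈ impls i, r p) {P : List (ℝ × ℝ)} (hP : P ∈ allPlans impls M) :
    ∀ x ∈ P, r x := by
  induction M generalizing P with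
  | zero => simp_all [allPlans]
  | succ M ih =>
    obtain ⟨S, hS, p, hp, rfl⟩ := hP
    simp only [List.mem_append, List.mem_singleton]
    rintro x (hx | rfl)
    · exact ih (fun i hi => h i (by omega)) hS x hx
    · exact h M (by omega) x hp

lemma take_mem_allPlans {M m : ℕ} (hm : m ≤ M) {P : List (ℝ × ℝ)}
    (hP : P ∈ allPlans impls M) : P.take m ∈ allPlans impls m := by
  induction M generalizing P with
  | zero => simp_all [allPlans]
  | succ M ih =>
    obtain ⟨S, hS, p, hp, rfl⟩ := hP
    have hlen := length_of_mem_allPlans hS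
    rcases Nat.lt_or_eq_of_le hm with hm | rfl
    · rw [List.take_append_of_le_length (by omega)]
      exact ih (by omega) hS
    · rw [List.take_of_length_le (by simp [hlen])]
      exact ⟨S, hS, p, hp, rfl⟩

lemma append_drop_mem_allPlans {M m : ℕ} (hm : m ≤ M) {P Q : List (ℝ × ℝ)}
    (hP : P ∈ allPlans impls M) (hQ : Q ∈ allPlans impls m) :
    Q ++ P.drop m ∈ allPlans impls M := by
  induction M generalizing P with
  | zero => simp_all [allPlans]
  | succ M ih =>
    obtain ⟨S, hS, p, hp, rfl⟩ := hP
    have hlen := length_of_mem_allPlans hS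
    rcases Nat.lt_or_eq_of_le hm with hm | rfl
    · rw [List.drop_append_of_le_length (by omega), ← List.append_assoc]
      exact ⟨_, ih (by omega) hS, p, hp, rfl⟩
    · rwa [List.drop_of_length_le (by simp [hlen]), List.append_nil]

lemma take_mem_paretoFrontier_allPlans {M m : ℕ} (hm : m ≤ M) {P : List (ℝ × ℝ)}
    (hP : P ∈ paretoFrontier (allPlans impls M)) (hpos : ∀ x ∈ P, 0 < x.1) :
    P.take m ∈ paretoFrontier (allPlans impls m) := by
  refine ⟨take_mem_allPlans hm hP.1, fun ⟨Q, hQ, hdom⟩ => hP.2 ?_⟩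
  have hsuffix : 0 < planQuality (P.drop m) :=
    planQuality_pos fun x hx => hpos x (List.mem_of_mem_drop hx)
  refine ⟨Q ++ P.drop m, append_drop_mem_allPlans hm hP.1 hQ, ?_⟩
  simpa only [List.take_append_drop] using hdom.append_right hsuffix

lemma dpFrontier_subset_allPlans (m : ℕ) : dpFrontier impls m ⊆ allPlans impls m := by
  induction m with
  | zero => exact le_rfl
  | succ m ih =>
    rintro P ⟨⟨S, hS, p, hp, rfl⟩, -⟩
    exact ⟨S, ih hS, p, hp, rfl⟩

lemma take_succ_eq_append_of_mem_allPlans {M m : ℕ} (hm : m < M) {P : List (ℝ × ℝ)}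
    (hP : P ∈ allPlans impls M) : ∃ p ∈ impls m, P.take (m + 1) = P.take m ++ [p] := by
  obtain ⟨S, hS, p, hp, hSp⟩ := take_mem_allPlans (Nat.succ_le_of_lt hm) hP
  refine ⟨p, hp, ?_⟩
  have hprefix : P.take m = S :=
    calc P.take m = (P.take (m + 1)).take m := by rw [List.take_take, min_eq_left m.le_succ]
      _ = S := by rw [hSp, List.take_left' (length_of_mem_allPlans hS)]
  rw [hSp, hprefix]

end allPlans

theorem pareto_optimal_plan_prefixes_in_dp_frontiers_general
    (M : ℕ) (impls : ℕ → Finset (ℝ × ℝ))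
    (hvalid : ∀ i < M, ∀ p ∈ impls i, 0 < p.1 ∧ p.1 ≤ 1 ∧ 0 ≤ p.2)
    (P : List (ℝ × ℝ)) (hP : P ∈ allPlans impls M)
    (hopt : ¬ ∃ Q ∈ allPlans impls M, Dominates Q P) :
    ∀ m ≤ M, P.take m ∈ dpFrontier impls m := by
  have hpos : ∀ x ∈ P, 0 < x.1 :=
    forall_mem_of_mem_allPlans (fun i hi p hp => (hvalid i hi p hp).1) hP
  intro m hm
  induction m with
  | zero => rfl
  | succ m ih =>
    obtain ⟨p, hp, htake⟩ := take_succ_eq_append_of_mem_allPlans hm hP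
    refine mem_paretoFrontier_of_subset (take_mem_paretoFrontier_allPlans hm ⟨hP, hopt⟩ hpos)
      ⟨P.take m, ih (by omega), p, hp, htake⟩ ?_
    rintro _ ⟨S, hS, q, hq, rfl⟩
    exact ⟨S, dpFrontier_subset_allPlans m hS, q, hq, rfl⟩

/-- For a layered plan with `M` logical operators, each with `N` physical implementations
(qualities in (0,1], costs in [0,∞)), every Pareto-optimal full plan has all of its
prefixes contained in the frontiers maintained by the dynamic program. -/
theorem pareto_optimal_plan_prefixes_in_dp_frontiers
    (M N : ℕ) (impls : ℕ → Finset (ℝ × ℝ))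
    (hcard : ∀ i < M, (impls i).card = N)
    (hvalid : ∀ i < M, ∀ p ∈ impls i, 0 < p.1 ∧ p.1 ≤ 1 ∧ 0 ≤ p.2)
    (P : List (ℝ × ℝ)) (hP : P ∈ allPlans impls M)
    (hopt : ¬ ∃ Q ∈ allPlans impls M, Dominates Q P) :
    ∀ m ≤ M, P.take m ∈ dpFrontier impls m :=
  pareto_optimal_plan_prefixes_in_dp_frontiers_general M impls hvalid P hP hopt
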